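/- arXiv:2207.09168 — 7 statements merged into one kernel-verified Lean document; each statement's English description precedes it below -/
import Mathlib

section
/- Let A be a graded vector space with degree ±1 operators d, d*, d^Λ, d^{Λ*} satisfying d^2 = (d*)^2 = (d^Λ)^2 = (d^{Λ*})^2 = 0, the anticommutation relations [d, d^{Λ*}] = 0, [d, d^Λ] = 0, [d*, d^Λ] = 0, [d*, d^{Λ*}] = 0, and Δ_d = Δ_{d^Λ} where Δ_d = dd* + d*d and Δ_{d^Λ} = d^Λ d^{Λ*} + d^{Λ*}d^Λ. Then the Bott–Chern Laplacian Δ^{BC}_{d^Λ} := d*d + d^{Λ*}d^Λ + d d^Λ d^{Λ*} d* + d^{Λ*}dd*d^Λ + d*d^Λ d^{Λ*}d + d^{Λ*}d*dd^Λ satisfies Δ^{BC}_{d^Λ} = Δ_{d^Λ}Δ_{d^Λ} + d*d + d^{Λ*}d^Λ. -/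
/-!
Each anticommutation moves `dΛ` or `dΛ*` past `d` or `d*` at the cost of a sign, and the
quartic terms come in pairs where the two signs cancel, so they regroup into
`dΛ Δ_d dΛ* + dΛ* Δ_d dΛ`. Replacing `Δ_d` by `Δ_{dΛ}` and using `dΛ² = dΛ*² = 0`, these
become `dΛ dΛ* dΛ dΛ* + dΛ* dΛ dΛ* dΛ`, which is exactly `Δ_{dΛ}²`.
-/

section AnticommutingElements

variable {R : Type*} [Ring R] {a b c e : R}

theorem mul_mul_mul_eq_of_add_mul_eq_zero (hab : a * b + b * a = 0) (hce : c * e + e * c = 0) :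
    a * b * c * e = b * (a * e) * c := by
  have hab' : a * b = -(b * a) := eq_neg_of_add_eq_zero_left hab
  have hce' : c * e = -(e * c) := eq_neg_of_add_eq_zero_left hce
  calc a * b * c * e = (a * b) * (c * e) := by noncomm_ring
    _ = (-(b * a)) * (-(e * c)) := by rw [hab', hce']
    _ = b * (a * e) * c := by noncomm_ring

theorem mul_anticomm_mul_of_mul_self_eq_zero_left (hb : b * b = 0) :
    b * (b * c + c * b) * c = b * c * (b * c) := by
  calc b * (b * c + c * b) * c = b * b * (c * c) + b * c * (b * c) := by noncomm_ring
    _ = b * c * (b * c) := by rw [hb, zero_mul, zero_add]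

theorem mul_anticomm_mul_of_mul_self_eq_zero_right (hc : c * c = 0) :
    c * (b * c + c * b) * b = c * b * (c * b) := by
  calc c * (b * c + c * b) * b = c * b * (c * b) + c * c * (b * b) := by noncomm_ring
    _ = c * b * (c * b) := by rw [hc, zero_mul, add_zero]

theorem anticomm_mul_self_of_mul_self_eq_zero (hb : b * b = 0) (hc : c * c = 0) :
    (b * c + c * b) * (b * c + c * b) = b * c * (b * c) + c * b * (c * b) := by
  calc (b * c + c * b) * (b * c + c * b)
        = b * c * (b * c) + b * (c * c) * b + c * (b * b) * c + c * b * (c * b) := by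
          noncomm_ring
    _ = b * c * (b * c) + c * b * (c * b) := by rw [hb, hc]; noncomm_ring

end AnticommutingElements

theorem bott_chern_laplacian_identity_general
    {V : Type*} [AddCommGroup V] [Module ℂ V]
    (d dstar dLam dLamstar : Module.End ℂ V)
    (hdL2 : dLam * dLam = 0) (hdLs2 : dLamstar * dLamstar = 0)
    (h1 : d * dLamstar + dLamstar * d = 0)
    (h2 : d * dLam + dLam * d = 0)
    (h3 : dstar * dLam + dLam * dstar = 0)
    (h4 : dstar * dLamstar + dLamstar * dstar = 0)
    (hDelta : d * dstar + dstar * d = dLam * dLamstar + dLamstar * dLam) :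
    dstar * d + dLamstar * dLam +
      d * dLam * dLamstar * dstar + dLamstar * d * dstar * dLam +
      dstar * dLam * dLamstar * d + dLamstar * dstar * d * dLam =
    (dLam * dLamstar + dLamstar * dLam) * (dLam * dLamstar + dLamstar * dLam) +
      dstar * d + dLamstar * dLam := by
  have e1 : d * dLam * dLamstar * dstar = dLam * (d * dstar) * dLamstar :=
    mul_mul_mul_eq_of_add_mul_eq_zero h2 ((add_comm _ _).trans h4)
  have e2 : dstar * dLam * dLamstar * d = dLam * (dstar * d) * dLamstar :=
    mul_mul_mul_eq_of_add_mul_eq_zero h3 ((add_comm _ _).trans h1)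
  calc dstar * d + dLamstar * dLam +
        d * dLam * dLamstar * dstar + dLamstar * d * dstar * dLam +
        dstar * dLam * dLamstar * d + dLamstar * dstar * d * dLam
      = dLam * (d * dstar + dstar * d) * dLamstar + dLamstar * (d * dstar + dstar * d) * dLam +
          dstar * d + dLamstar * dLam := by rw [e1, e2]; noncomm_ring
    _ = dLam * dLamstar * (dLam * dLamstar) + dLamstar * dLam * (dLamstar * dLam) +
          dstar * d + dLamstar * dLam := by
        rw [hDelta, mul_anticomm_mul_of_mul_self_eq_zero_left hdL2,
          mul_anticomm_mul_of_mul_self_eq_zero_right hdLs2]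
    _ = _ := by rw [anticomm_mul_self_of_mul_self_eq_zero hdL2 hdLs2]

/-- Let `A` be a graded vector space with degree `±1` operators `d, d*, dΛ, dΛ*`
squaring to zero, pairwise anticommutation relations `[d,dΛ*] = [d,dΛ] = [d*,dΛ] =
[d*,dΛ*] = 0` (graded commutators of odd operators, i.e. anticommutators), and
`Δ_d = Δ_{dΛ}`. Then the Bott–Chern Laplacian
`Δ^{BC}_{dΛ} = d*d + dΛ*dΛ + d dΛ dΛ* d* + dΛ* d d* dΛ + d* dΛ dΛ* d + dΛ* d* d dΛ`
satisfies `Δ^{BC}_{dΛ} = Δ_{dΛ} Δ_{dΛ} + d*d + dΛ*dΛ`. -/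
theorem bott_chern_laplacian_identity
    {V : Type*} [AddCommGroup V] [Module ℂ V]
    (d dstar dLam dLamstar : Module.End ℂ V)
    (hd2 : d * d = 0) (hds2 : dstar * dstar = 0)
    (hdL2 : dLam * dLam = 0) (hdLs2 : dLamstar * dLamstar = 0)
    (h1 : d * dLamstar + dLamstar * d = 0)
    (h2 : d * dLam + dLam * d = 0)
    (h3 : dstar * dLam + dLam * dstar = 0)
    (h4 : dstar * dLamstar + dLamstar * dstar = 0)
    (hDelta : d * dstar + dstar * d = dLam * dLamstar + dLamstar * dLam) :
    dstar * d + dLamstar * dLam +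
      d * dLam * dLamstar * dstar + dLamstar * d * dstar * dLam +
      dstar * dLam * dLamstar * d + dLamstar * dstar * d * dLam =
    (dLam * dLamstar + dLamstar * dLam) * (dLam * dLamstar + dLamstar * dLam) +
      dstar * d + dLamstar * dLam :=
  bott_chern_laplacian_identity_general d dstar dLam dLamstar hdL2 hdLs2 h1 h2 h3 h4 hDelta
end

section
/- Under the same hypotheses as the previous statement, the Bott–Chern type Laplacians satisfy Δ^{BC}_{d^Λ} = Δ^{BC}_{d^{Λ*}} + d^{Λ*}d^Λ - d^Λ d^{Λ*}, where Δ^{BC}_{d^{Λ*}} := d*d + d^Λ d^{Λ*} + d d^{Λ*} d^Λ d* + d^Λ dd*d^{Λ*} + d*d^{Λ*}d^Λ d + d^Λ d*dd^{Λ*}. -/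
/-!
Write `Δ = d d* + d* d`. Using `dΛ dΛ* = Δ - dΛ* dΛ`, and the fact that `d` and `d*` commute with
`dΛ* dΛ` (each anticommutes with both factors), the quartic part of `Δ^{BC}_{dΛ}` becomes
`d Δ d* + d* Δ d - dΛ* dΛ Δ + dΛ* Δ dΛ`. Substituting `Δ = dΛ dΛ* + dΛ* dΛ` in the last two terms,
both equal `dΛ* dΛ dΛ* dΛ` and cancel, so the quartic part is `Δ²`. The same holds with `dΛ` and
`dΛ*` exchanged, so the quartic parts of the two Laplacians agree.
-/

section

variable {R : Type*} [Ring R] {d dstar a b : R}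

theorem commute_mul_of_anticommute (ha : d * a + a * d = 0) (hb : d * b + b * d = 0) :
    Commute d (a * b) := by
  have ha' : d * a = -(a * d) := eq_neg_of_add_eq_zero_left ha
  have hb' : d * b = -(b * d) := eq_neg_of_add_eq_zero_left hb
  calc d * (a * b) = d * a * b := (mul_assoc _ _ _).symm
    _ = -(a * (d * b)) := by rw [ha']; noncomm_ring
    _ = a * b * d := by rw [hb']; noncomm_ring

theorem add_mul_sq_of_mul_self_eq_zero (hd : d * d = 0) (hs : dstar * dstar = 0) :
    (d * dstar + dstar * d) ^ 2 =
      d * (d * dstar + dstar * d) * dstar + dstar * (d * dstar + dstar * d) * d := by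
  calc (d * dstar + dstar * d) ^ 2
      = d * (d * dstar + dstar * d) * dstar + dstar * (d * dstar + dstar * d) * d
        + d * (dstar * dstar) * d + dstar * (d * d) * dstar
        - d * d * (dstar * dstar) - dstar * dstar * (d * d) := by noncomm_ring
    _ = _ := by rw [hd, hs]; noncomm_ring

theorem quartic_sum_eq_sq_of_anticommute (hd : d * d = 0) (hs : dstar * dstar = 0)
    (ha : a * a = 0) (hb : b * b = 0)
    (hdb : d * b + b * d = 0) (hda : d * a + a * d = 0)
    (hsa : dstar * a + a * dstar = 0) (hsb : dstar * b + b * dstar = 0)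
    (hΔ : d * dstar + dstar * d = a * b + b * a) :
    d * a * b * dstar + b * d * dstar * a + dstar * a * b * d + b * dstar * d * a =
      (d * dstar + dstar * d) ^ 2 := by
  set Δ := d * dstar + dstar * d with hΔ_def
  have hab : a * b = Δ - b * a := eq_sub_of_add_eq hΔ.symm
  have hd_ba : Commute d (b * a) := commute_mul_of_anticommute hdb hda
  have hs_ba : Commute dstar (b * a) := commute_mul_of_anticommute hsb hsa
  -- both correction terms equal `b a b a`, using `a² = b² = 0`
  have hcancel : b * Δ * a - b * a * Δ = 0 := by
    rw [hΔ]
    calc b * (a * b + b * a) * a - b * a * (a * b + b * a)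
        = (b * b) * (a * a) - b * (a * a) * b := by noncomm_ring
      _ = 0 := by rw [ha, hb]; noncomm_ring
  calc d * a * b * dstar + b * d * dstar * a + dstar * a * b * d + b * dstar * d * a
      = d * (a * b) * dstar + dstar * (a * b) * d + b * Δ * a := by rw [hΔ_def]; noncomm_ring
    _ = d * Δ * dstar + dstar * Δ * d - (d * (b * a)) * dstar - (dstar * (b * a)) * d
        + b * Δ * a := by rw [hab]; noncomm_ring
    _ = d * Δ * dstar + dstar * Δ * d + (b * Δ * a - b * a * Δ) := by
        rw [hd_ba.eq, hs_ba.eq, hΔ_def]; noncomm_ring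
    _ = Δ ^ 2 := by rw [hcancel, add_zero, add_mul_sq_of_mul_self_eq_zero hd hs]

end

/-- Under the same hypotheses as Proposition 2.7 of the paper (degree `±1` operators
`d, d*, dΛ, dΛ*` squaring to zero, with the anticommutation relations `[d,dΛ*] =
[d,dΛ] = [d*,dΛ] = [d*,dΛ*] = 0` and `Δ_d = Δ_{dΛ}`), the Bott–Chern type Laplacians
satisfy `Δ^{BC}_{dΛ} = Δ^{BC}_{dΛ*} + dΛ* dΛ - dΛ dΛ*`, where
`Δ^{BC}_{dΛ*} = d*d + dΛ dΛ* + d dΛ* dΛ d* + dΛ d d* dΛ* + d* dΛ* dΛ d + dΛ d* d dΛ*`. -/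
theorem bott_chern_laplacians_comparison
    {V : Type*} [AddCommGroup V] [Module ℂ V]
    (d dstar dLam dLamstar : Module.End ℂ V)
    (hd2 : d * d = 0) (hds2 : dstar * dstar = 0)
    (hdL2 : dLam * dLam = 0) (hdLs2 : dLamstar * dLamstar = 0)
    (h1 : d * dLamstar + dLamstar * d = 0)
    (h2 : d * dLam + dLam * d = 0)
    (h3 : dstar * dLam + dLam * dstar = 0)
    (h4 : dstar * dLamstar + dLamstar * dstar = 0)
    (hDelta : d * dstar + dstar * d = dLam * dLamstar + dLamstar * dLam) :
    dstar * d + dLamstar * dLam +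
      d * dLam * dLamstar * dstar + dLamstar * d * dstar * dLam +
      dstar * dLam * dLamstar * d + dLamstar * dstar * d * dLam =
    (dstar * d + dLam * dLamstar +
      d * dLamstar * dLam * dstar + dLam * d * dstar * dLamstar +
      dstar * dLamstar * dLam * d + dLam * dstar * d * dLamstar) +
      dLamstar * dLam - dLam * dLamstar := by
  have hLam := quartic_sum_eq_sq_of_anticommute hd2 hds2 hdL2 hdLs2 h1 h2 h3 h4 hDelta
  have hLamstar := quartic_sum_eq_sq_of_anticommute hd2 hds2 hdLs2 hdL2 h2 h1 h4 h3
    (hDelta.trans (add_comm _ _))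
  calc _ = dstar * d + dLamstar * dLam + (d * dLam * dLamstar * dstar
        + dLamstar * d * dstar * dLam + dstar * dLam * dLamstar * d
        + dLamstar * dstar * d * dLam) := by abel
    _ = dstar * d + dLamstar * dLam + (d * dLamstar * dLam * dstar
        + dLam * d * dstar * dLamstar + dstar * dLamstar * dLam * d
        + dLam * dstar * d * dLamstar) := by rw [hLam, hLamstar]
    _ = _ := by abel
end

section
/- Let (M, I, J, K, Ω) be a compact balanced HKT manifold. Then the Laplacians Δ_∂ = ∂∂* + ∂*∂ and Δ_{∂_J} = ∂_J ∂_J* + ∂_J* ∂_J acting on (p,0)-forms coincide, and consequently the spaces of harmonic forms satisfy 𝓗^{p,0}_∂(M) = 𝓗^{p,0}_{∂_J}(M) for every p. -/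
/-!
Substituting `∂* = [Λ, ∂_J]` and `∂_J* = [∂, Λ]`, the difference `Δ_∂ - Δ_{∂_J}` becomes
`[Λ, ∂∂_J + ∂_J∂]`, which vanishes. Harmonic forms are the kernel of the Laplacian
because `⟪Δ_∂ α, α⟫ = ‖∂α‖² + ‖∂*α‖²`.
-/

def laplacian {R : Type*} [Mul R] [Add R] (d dStar : R) : R := d * dStar + dStar * d

theorem laplacian_eq_of_anticommute_of_commutator_eq {R : Type*} [Ring R]
    {d e lam dStar eStar : R}
    (hanti : d * e + e * d = 0) (hdStar : lam * e - e * lam = dStar)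
    (heStar : d * lam - lam * d = eStar) :
    laplacian d dStar = laplacian e eStar := by
  have hdiff : laplacian d dStar - laplacian e eStar =
      lam * (d * e + e * d) - (d * e + e * d) * lam := by
    rw [laplacian, laplacian, ← hdStar, ← heStar]
    noncomm_ring
  rwa [hanti, mul_zero, zero_mul, sub_zero, sub_eq_zero] at hdiff

section InnerProductSpace

variable {𝕜 V : Type*} [RCLike 𝕜] [NormedAddCommGroup V] [InnerProductSpace 𝕜 V]
  {d dStar : Module.End 𝕜 V}

theorem inner_laplacian_apply_self (hadj : ∀ x y : V, inner 𝕜 (d x) y = inner 𝕜 x (dStar y))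
    (α : V) :
    inner 𝕜 (laplacian d dStar α) α = (‖d α‖ ^ 2 + ‖dStar α‖ ^ 2 : ℝ) := by
  have hd : inner 𝕜 (dStar (d α)) α = (‖d α‖ : 𝕜) ^ 2 := by
    rw [← inner_conj_symm, ← hadj, inner_self_eq_norm_sq_to_K, map_pow, RCLike.conj_ofReal]
  have hdStar : inner 𝕜 (d (dStar α)) α = (‖dStar α‖ : 𝕜) ^ 2 := by
    rw [hadj, inner_self_eq_norm_sq_to_K]
  rw [laplacian, LinearMap.add_apply, Module.End.mul_apply, Module.End.mul_apply,
    inner_add_left, hd, hdStar]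
  push_cast
  ring

theorem laplacian_apply_eq_zero_iff (hadj : ∀ x y : V, inner 𝕜 (d x) y = inner 𝕜 x (dStar y))
    (α : V) :
    laplacian d dStar α = 0 ↔ d α = 0 ∧ dStar α = 0 := by
  refine ⟨fun h => ?_, fun ⟨hd, hdStar⟩ => by
    simp only [laplacian, LinearMap.add_apply, Module.End.mul_apply, hd, hdStar, map_zero,
      add_zero]⟩
  have hsum : ‖d α‖ ^ 2 + ‖dStar α‖ ^ 2 = 0 := by
    have := inner_laplacian_apply_self hadj α
    rwa [h, inner_zero_left, eq_comm, RCLike.ofReal_eq_zero] at this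
  rw [← norm_eq_zero, ← norm_eq_zero (a := dStar α)]
  constructor <;> nlinarith [norm_nonneg (d α), norm_nonneg (dStar α)]

end InnerProductSpace

theorem balanced_HKT_laplacians_coincide_general
    {V : Type*} [NormedAddCommGroup V] [InnerProductSpace ℂ V]
    (A : ℕ → Submodule ℂ V)
    (del delJ delS delJS Lam : Module.End ℂ V)
    -- differentials
    (hanti : del * delJ + delJ * del = 0)
    -- formal adjoints with respect to the L² inner product
    (hadj : ∀ x y : V, (inner ℂ (del x) y : ℂ) = inner ℂ x (delS y))
    (hadjJ : ∀ x y : V, (inner ℂ (delJ x) y : ℂ) = inner ℂ x (delJS y))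
    -- balanced HKT identities (Proposition 3.4)
    (h2 : del * Lam - Lam * del = delJS)
    (h4 : Lam * delJ - delJ * Lam = delS) :
    del * delS + delS * del = delJ * delJS + delJS * delJ ∧
    ∀ p, ∀ α ∈ A p, ((del α = 0 ∧ delS α = 0) ↔ (delJ α = 0 ∧ delJS α = 0)) := by
  have hΔ : laplacian del delS = laplacian delJ delJS :=
    laplacian_eq_of_anticommute_of_commutator_eq hanti h4 h2
  refine ⟨hΔ, fun _ α _ => ?_⟩
  rw [← laplacian_apply_eq_zero_iff hadj, ← laplacian_apply_eq_zero_iff hadjJ, hΔ]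

/-- **Proposition 3.5 (balanced HKT).** Let `(M,I,J,K,Ω)` be a compact balanced HKT
manifold. We model the space of `(p,0)`-forms as a graded inner product space `A`
equipped with the operators `∂, ∂_J` (degree `+1`), their formal adjoints `∂*, ∂_J*`,
the Lefschetz operator `L = Ω ∧ -` and its adjoint `Λ`, satisfying `∂² = ∂_J² = 0`,
`∂∂_J + ∂_J∂ = 0`, `[∂, L] = 0` (since `∂Ω = 0`) and the balanced-HKT Kähler-type
identities `[∂*, L] = -∂_J`, `[∂, Λ] = ∂_J*`, `[L, ∂_J*] = -∂`, `[Λ, ∂_J] = ∂*`.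
Then `Δ_∂ = Δ_{∂_J}`, and consequently the spaces of harmonic `(p,0)`-forms coincide:
`𝓗^{p,0}_∂(M) = 𝓗^{p,0}_{∂_J}(M)` for every `p`. -/
theorem balanced_HKT_laplacians_coincide
    {V : Type*} [NormedAddCommGroup V] [InnerProductSpace ℂ V] (n : ℕ)
    (A : ℕ → Submodule ℂ V)
    (del delJ delS delJS L Lam : Module.End ℂ V)
    -- degrees
    (hdeldeg : ∀ p, ∀ x ∈ A p, del x ∈ A (p + 1))
    (hdelJdeg : ∀ p, ∀ x ∈ A p, delJ x ∈ A (p + 1))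
    (hLdeg : ∀ p, ∀ x ∈ A p, L x ∈ A (p + 2))
    -- differentials
    (hd2 : del * del = 0) (hdJ2 : delJ * delJ = 0)
    (hanti : del * delJ + delJ * del = 0)
    -- HKT condition: ∂Ω = 0, hence [∂, L] = 0, and also [∂_J, L] = 0
    (hdL : del * L = L * del) (hdJL : delJ * L = L * delJ)
    -- formal adjoints with respect to the L² inner product
    (hadj : ∀ x y : V, (inner ℂ (del x) y : ℂ) = inner ℂ x (delS y))
    (hadjJ : ∀ x y : V, (inner ℂ (delJ x) y : ℂ) = inner ℂ x (delJS y))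
    (hadjL : ∀ x y : V, (inner ℂ (L x) y : ℂ) = inner ℂ x (Lam y))
    -- balanced HKT identities (Proposition 3.4)
    (h1 : delS * L - L * delS = -delJ)
    (h2 : del * Lam - Lam * del = delJS)
    (h3 : L * delJS - delJS * L = -del)
    (h4 : Lam * delJ - delJ * Lam = delS) :
    del * delS + delS * del = delJ * delJS + delJS * delJ ∧
    ∀ p, ∀ α ∈ A p, ((del α = 0 ∧ delS α = 0) ↔ (delJ α = 0 ∧ delJS α = 0)) :=
  balanced_HKT_laplacians_coincide_general A del delJ delS delJS Lam hanti hadj hadjJ h2 h4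
end

section
/- Let (M, I, J, K, Ω) be a compact balanced HKT manifold. Then the Bott–Chern Laplacian on (p,0)-forms satisfies Δ_BC = Δ_∂ Δ_∂ + ∂*∂ + ∂_J*∂_J, and consequently 𝓗^{p,0}_BC(M) = 𝓗^{p,0}_∂(M) for every p. -/
/-!
Everything follows from `∂² = ∂_J² = ∂∂_J + ∂_J∂ = 0`, the adjunctions, and the two Kähler-type
identities `∂_J* = [∂, Λ]`, `∂* = [Λ, ∂_J]`. These give the anticommutation of all four first-order
operators with one another (except each with its own adjoint) and `Δ_∂ = Δ_{∂_J}`. Then in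
`∂∂_J∂_J*∂* = ∂Δ_{∂_J}∂* - (∂∂_J*)(∂_J∂*)` the first term is `(∂∂*)²` and the second is
`-∂_J*∂∂*∂_J`, cancelling a term of `Δ_BC`; symmetrically for `∂*∂_J∂_J*∂`, so the
fourth-order part of `Δ_BC` is `(∂∂*)² + (∂*∂)² = Δ_∂²`. For the harmonic spaces, `∂_J α = 0` makes `∂*α = -∂_J Λα` exact, so
`∂_J*∂*α = 0` forces `∂*α = 0`; conversely `Δ_{∂_J} α = Δ_∂ α = 0` forces `∂_J α = 0`.
-/

section Algebra

variable {R : Type*} [Ring R]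

theorem mul_commutator_add_commutator_mul_of_mul_self_eq_zero {d : R} (hd : d * d = 0) (x : R) :
    d * (d * x - x * d) + (d * x - x * d) * d = 0 := by
  have : d * (d * x - x * d) + (d * x - x * d) * d = d * d * x - x * (d * d) := by noncomm_ring
  rw [this, hd, zero_mul, mul_zero, sub_zero]

theorem anticommutator_commutator_eq_of_anticommute {d d' : R} (h : d * d' + d' * d = 0) (x : R) :
    d' * (d * x - x * d) + (d * x - x * d) * d' = d * (x * d' - d' * x) + (x * d' - d' * x) * d := by
  rw [← sub_eq_zero]
  have : d' * (d * x - x * d) + (d * x - x * d) * d' - (d * (x * d' - d' * x) + (x * d' - d' * x) * d)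
      = (d * d' + d' * d) * x - x * (d * d' + d' * d) := by noncomm_ring
  rw [this, h, zero_mul, mul_zero, sub_zero]

/-- `d, j` play `∂, ∂_J` and `s, t` play `∂*, ∂_J*`. -/
theorem bottChern_eq_sq_laplacian_add {d j s t : R} (hd : d * d = 0) (hs : s * s = 0)
    (hdj : d * j + j * d = 0) (hdt : d * t + t * d = 0) (hsj : s * j + j * s = 0)
    (hst : s * t + t * s = 0) (hΔ : j * t + t * j = d * s + s * d) :
    s * d + t * j + d * j * t * s + t * s * d * j + t * d * s * j + s * j * t * d =
      (d * s + s * d) * (d * s + s * d) + s * d + t * j := by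
  have hdjts : d * j * t * s = d * s * (d * s) - t * d * s * j :=
    calc d * j * t * s = d * (j * t + t * j) * s - (d * t) * (j * s) := by noncomm_ring
      _ = d * (d * s + s * d) * s - (-(t * d)) * (-(s * j)) := by
          rw [hΔ, eq_neg_of_add_eq_zero_left hdt, eq_neg_of_add_eq_zero_right hsj]
      _ = d * d * (s * s) + d * s * (d * s) - t * d * s * j := by noncomm_ring
      _ = d * s * (d * s) - t * d * s * j := by rw [hd, zero_mul, zero_add]
  have hsjtd : s * j * t * d = s * d * (s * d) - t * s * d * j :=
    calc s * j * t * d = s * (j * t + t * j) * d - (s * t) * (j * d) := by noncomm_ring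
      _ = s * (d * s + s * d) * d - (-(t * s)) * (-(d * j)) := by
          rw [hΔ, eq_neg_of_add_eq_zero_left hst, eq_neg_of_add_eq_zero_right hdj]
      _ = s * s * (d * d) + s * d * (s * d) - t * s * d * j := by noncomm_ring
      _ = s * d * (s * d) - t * s * d * j := by rw [hs, zero_mul, zero_add]
  have hsq : (d * s + s * d) * (d * s + s * d) = d * s * (d * s) + s * d * (s * d) := by
    have : (d * s + s * d) * (d * s + s * d)
        = d * s * (d * s) + d * (s * s) * d + s * (d * d) * s + s * d * (s * d) := by noncomm_ring
    rw [this, hs, hd, mul_zero, zero_mul, mul_zero, zero_mul, add_zero, add_zero]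
  rw [hdjts, hsjtd, hsq]
  abel

end Algebra

section FormalAdjoint

variable {V : Type*} [NormedAddCommGroup V] [InnerProductSpace ℂ V]

/-- Stated pointwise: `V` need not be complete, so `LinearMap.adjoint` is unavailable. -/
def IsFormalAdjoint (T S : Module.End ℂ V) : Prop :=
  ∀ x y : V, inner ℂ (T x) y = inner ℂ x (S y)

namespace IsFormalAdjoint

variable {T S T' S' : Module.End ℂ V}

theorem zero : IsFormalAdjoint (0 : Module.End ℂ V) 0 := fun x y => by simp

theorem add (h : IsFormalAdjoint T S) (h' : IsFormalAdjoint T' S') :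
    IsFormalAdjoint (T + T') (S + S') := fun x y => by
  simp only [LinearMap.add_apply, inner_add_left, inner_add_right, h x y, h' x y]

theorem mul (h : IsFormalAdjoint T S) (h' : IsFormalAdjoint T' S') :
    IsFormalAdjoint (T * T') (S' * S) := fun x y => by
  simp only [Module.End.mul_apply, h (T' x) y, h' x (S y)]

theorem unique (h : IsFormalAdjoint T S) (h' : IsFormalAdjoint T S') : S = S' := by
  ext y
  rw [← sub_eq_zero, ← inner_self_eq_zero (𝕜 := ℂ)]
  rw [inner_sub_right, ← h, ← h', sub_self]

theorem eq_zero_of_eq_zero (h : IsFormalAdjoint T S) (hT : T = 0) : S = 0 :=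
  (hT ▸ h).unique zero

theorem eq_zero_of_apply_eq_zero {z : V} (h : IsFormalAdjoint T S) (hSz : S (T z) = 0) :
    T z = 0 := by
  rw [← inner_self_eq_zero (𝕜 := ℂ), h, hSz, inner_zero_right]

/-- `⟪(TS + ST) x, x⟫ = ‖Sx‖² + ‖Tx‖²`. -/
theorem apply_eq_zero_of_laplacian_apply_eq_zero {x : V} (h : IsFormalAdjoint T S)
    (hx : (T * S + S * T) x = 0) : T x = 0 ∧ S x = 0 := by
  have hsum : ‖S x‖ ^ 2 + ‖T x‖ ^ 2 = 0 := by
    have hTS : inner ℂ (T (S x)) x = inner ℂ (S x) (S x) := h (S x) x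
    have hST : inner ℂ (S (T x)) x = inner ℂ (T x) (T x) := by
      rw [← inner_conj_symm, ← h, inner_conj_symm]
    have := congrArg (fun v => inner ℂ v x) hx
    simp only [LinearMap.add_apply, Module.End.mul_apply, inner_add_left, inner_zero_left] at this
    rw [hTS, hST, inner_self_eq_norm_sq_to_K, inner_self_eq_norm_sq_to_K] at this
    exact Complex.ofReal_eq_zero.mp (by push_cast; exact this)
  constructor <;> rw [← norm_eq_zero] <;> nlinarith [sq_nonneg ‖S x‖, sq_nonneg ‖T x‖]

end IsFormalAdjoint

end FormalAdjoint

theorem balanced_HKT_bott_chern_laplacian_general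
    {V : Type*} [NormedAddCommGroup V] [InnerProductSpace ℂ V]
    (A : ℕ → Submodule ℂ V)
    (del delJ delS delJS Lam : Module.End ℂ V)
    (hd2 : del * del = 0) (hdJ2 : delJ * delJ = 0)
    (hanti : del * delJ + delJ * del = 0)
    (hadj : ∀ x y : V, (inner ℂ (del x) y : ℂ) = inner ℂ x (delS y))
    (hadjJ : ∀ x y : V, (inner ℂ (delJ x) y : ℂ) = inner ℂ x (delJS y))
    (h2 : del * Lam - Lam * del = delJS)
    (h4 : Lam * delJ - delJ * Lam = delS) :
    (delS * del + delJS * delJ +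
      del * delJ * delJS * delS + delJS * delS * del * delJ +
      delJS * del * delS * delJ + delS * delJ * delJS * del =
     (del * delS + delS * del) * (del * delS + delS * del) +
      delS * del + delJS * delJ) ∧
    ∀ p, ∀ α ∈ A p,
      ((del α = 0 ∧ delJ α = 0 ∧ delJS (delS α) = 0) ↔ (del α = 0 ∧ delS α = 0)) := by
  have hadj' : IsFormalAdjoint del delS := hadj
  have hadjJ' : IsFormalAdjoint delJ delJS := hadjJ
  have hdelS2 : delS * delS = 0 := (hadj'.mul hadj').eq_zero_of_eq_zero hd2
  have hdelS_delJS : delS * delJS + delJS * delS = 0 := (add_comm _ _).trans <|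
    ((hadj'.mul hadjJ').add (hadjJ'.mul hadj')).eq_zero_of_eq_zero hanti
  have hdel_delJS : del * delJS + delJS * del = 0 :=
    h2 ▸ mul_commutator_add_commutator_mul_of_mul_self_eq_zero hd2 Lam
  have hdelS_delJ : delS * delJ + delJ * delS = 0 := by
    have hcomm : delJ * -Lam - -Lam * delJ = delS := by rw [← h4]; noncomm_ring
    have := mul_commutator_add_commutator_mul_of_mul_self_eq_zero hdJ2 (-Lam)
    rwa [hcomm, add_comm] at this
  have hΔ : delJ * delJS + delJS * delJ = del * delS + delS * del :=
    h2 ▸ h4 ▸ anticommutator_commutator_eq_of_anticommute hanti Lam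
  refine ⟨bottChern_eq_sq_laplacian_add hd2 hdelS2 hanti hdel_delJS hdelS_delJ hdelS_delJS hΔ,
    fun p α _ => ⟨fun ⟨hd, hj, hjs⟩ => ⟨hd, ?_⟩, fun ⟨hd, hs⟩ => ⟨hd, ?_, by rw [hs, map_zero]⟩⟩⟩
  · have hexact : delJ (-Lam α) = delS α := by
      rw [← h4, LinearMap.sub_apply, Module.End.mul_apply, Module.End.mul_apply, hj, map_zero,
        zero_sub, map_neg]
    rw [← hexact] at hjs ⊢
    exact hadjJ'.eq_zero_of_apply_eq_zero hjs
  · refine (hadjJ'.apply_eq_zero_of_laplacian_apply_eq_zero ?_).1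
    rw [hΔ, LinearMap.add_apply, Module.End.mul_apply, Module.End.mul_apply, hd, hs, map_zero,
      map_zero, add_zero]

/-- **Proposition 3.8 (balanced HKT, Bott–Chern Laplacian).** Let `(M,I,J,K,Ω)` be a
compact balanced HKT manifold, modelled as in the previous statement by a graded inner
product space with operators `∂, ∂_J, ∂*, ∂_J*, L, Λ` satisfying the balanced HKT
identities. Then the Bott–Chern Laplacian on `(p,0)`-forms satisfies
`Δ_BC = Δ_∂ Δ_∂ + ∂*∂ + ∂_J*∂_J`, and consequently
`𝓗^{p,0}_BC(M) = 𝓗^{p,0}_∂(M)` for every `p`. -/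
theorem balanced_HKT_bott_chern_laplacian
    {V : Type*} [NormedAddCommGroup V] [InnerProductSpace ℂ V] (n : ℕ)
    (A : ℕ → Submodule ℂ V)
    (del delJ delS delJS L Lam : Module.End ℂ V)
    (hdeldeg : ∀ p, ∀ x ∈ A p, del x ∈ A (p + 1))
    (hdelJdeg : ∀ p, ∀ x ∈ A p, delJ x ∈ A (p + 1))
    (hLdeg : ∀ p, ∀ x ∈ A p, L x ∈ A (p + 2))
    (hd2 : del * del = 0) (hdJ2 : delJ * delJ = 0)
    (hanti : del * delJ + delJ * del = 0)
    (hdL : del * L = L * del) (hdJL : delJ * L = L * delJ)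
    (hadj : ∀ x y : V, (inner ℂ (del x) y : ℂ) = inner ℂ x (delS y))
    (hadjJ : ∀ x y : V, (inner ℂ (delJ x) y : ℂ) = inner ℂ x (delJS y))
    (hadjL : ∀ x y : V, (inner ℂ (L x) y : ℂ) = inner ℂ x (Lam y))
    (h1 : delS * L - L * delS = -delJ)
    (h2 : del * Lam - Lam * del = delJS)
    (h3 : L * delJS - delJS * L = -del)
    (h4 : Lam * delJ - delJ * Lam = delS) :
    (delS * del + delJS * delJ +
      del * delJ * delJS * delS + delJS * delS * del * delJ +
      delJS * del * delS * delJ + delS * delJ * delJS * del =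
     (del * delS + delS * del) * (del * delS + delS * del) +
      delS * del + delJS * delJ) ∧
    ∀ p, ∀ α ∈ A p,
      ((del α = 0 ∧ delJ α = 0 ∧ delJS (delS α) = 0) ↔ (del α = 0 ∧ delS α = 0)) :=
  balanced_HKT_bott_chern_laplacian_general A del delJ delS delJS Lam hd2 hdJ2 hanti hadj hadjJ h2
    h4
end

section
/- Let (A•, ∂, ∂_J) be a bigraded structure where ∂, ∂_J are anticommuting differentials on A• := ⊕_p A^p with ∂² = ∂_J² = 0, satisfying the ∂∂_J-lemma: ker ∂ ∩ ker ∂_J ∩ (im ∂ + im ∂_J) = im ∂∂_J. Then the inclusion i : (A• ∩ ker ∂_J, ∂) → (A•, ∂) induces an isomorphism on ∂-cohomology. -/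
namespace Module.End

variable {R M : Type*} [Ring R] [AddCommGroup M] [Module R M]

lemma apply_apply_eq_zero_of_mul_eq_zero {f g : Module.End R M} (h : f * g = 0) (x : M) :
    f (g x) = 0 := by
  simpa using LinearMap.congr_fun h x

lemma apply_apply_eq_neg_of_anticomm {f g : Module.End R M} (h : f * g + g * f = 0) (x : M) :
    f (g x) = -g (f x) := by
  simpa [eq_neg_iff_add_eq_zero] using LinearMap.congr_fun h x

/-- The `∂∂_J`-lemma: `ker ∂ ∩ ker ∂_J ∩ (im ∂ + im ∂_J) = im ∂∂_J` (the inclusion `⊇` being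
automatic). -/
def SatisfiesDDJLemma (d dJ : Module.End R M) : Prop :=
  ∀ α : M, d α = 0 → dJ α = 0 → (∃ β γ : M, α = d β + dJ γ) → ∃ η : M, α = d (dJ η)

variable {d dJ : Module.End R M}

lemma SatisfiesDDJLemma.exists_dJ_closed_primitive (hlemma : SatisfiesDDJLemma d dJ)
    (hdJ2 : dJ * dJ = 0) {α : M} (hJ : dJ α = 0) (hD : d α = 0) (hexact : ∃ β, α = d β) :
    ∃ γ, dJ γ = 0 ∧ α = d γ := by
  obtain ⟨β, rfl⟩ := hexact
  obtain ⟨η, hη⟩ := hlemma (d β) hD hJ ⟨β, 0, by simp⟩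
  exact ⟨dJ η, apply_apply_eq_zero_of_mul_eq_zero hdJ2 η, hη⟩

/-- If `dα = 0`, then `dJ α` is `d`-closed, `dJ`-closed and `dJ`-exact, hence `dJ α = d dJ η`;
then `α + d η` is `dJ`-closed and `d`-cohomologous to `α`. -/
lemma SatisfiesDDJLemma.exists_dJ_closed_cohomologous (hlemma : SatisfiesDDJLemma d dJ)
    (hdJ2 : dJ * dJ = 0) (hanti : d * dJ + dJ * d = 0) {α : M} (hD : d α = 0) :
    ∃ γ β, dJ γ = 0 ∧ α = γ + d β := by
  have hclosed : d (dJ α) = 0 := by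
    rw [apply_apply_eq_neg_of_anticomm hanti, hD, map_zero, neg_zero]
  obtain ⟨η, hη⟩ := hlemma (dJ α) hclosed (apply_apply_eq_zero_of_mul_eq_zero hdJ2 α)
    ⟨0, α, by simp⟩
  refine ⟨α + d η, -η, ?_, by simp⟩
  rw [map_add, hη, apply_apply_eq_neg_of_anticomm hanti, neg_add_cancel]

end Module.End

theorem inclusion_ker_delJ_quasi_iso_general
    {V : Type*} [AddCommGroup V] [Module ℂ V]
    (del delJ : Module.End ℂ V)
    (hdJ2 : delJ * delJ = 0)
    (hanti : del * delJ + delJ * del = 0)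
    (hlemma : ∀ α : V, del α = 0 → delJ α = 0 → (∃ β γ : V, α = del β + delJ γ) →
      ∃ η : V, α = del (delJ η)) :
    -- injectivity of H(i)
    (∀ α : V, delJ α = 0 → del α = 0 → (∃ β : V, α = del β) →
      ∃ γ : V, delJ γ = 0 ∧ α = del γ) ∧
    -- surjectivity of H(i)
    (∀ α : V, del α = 0 → ∃ γ β : V, delJ γ = 0 ∧ α = γ + del β) :=
  have hlemma : Module.End.SatisfiesDDJLemma del delJ := hlemma
  ⟨fun _ hJ hD hexact => hlemma.exists_dJ_closed_primitive hdJ2 hJ hD hexact,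
    fun _ hD => hlemma.exists_dJ_closed_cohomologous hdJ2 hanti hD⟩

/-- **Lemma 4.2.** Let `(A•, ∂, ∂_J)` be a complex with two anticommuting degree-1
differentials (`∂² = ∂_J² = 0`, `∂∂_J + ∂_J∂ = 0`) satisfying the `∂∂_J`-lemma:
`ker ∂ ∩ ker ∂_J ∩ (im ∂ + im ∂_J) = im ∂∂_J`. Then the inclusion
`i : (A• ∩ ker ∂_J, ∂) → (A•, ∂)` induces an isomorphism on `∂`-cohomology, stated
here by unfolding injectivity and surjectivity of the induced map. -/
theorem inclusion_ker_delJ_quasi_iso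
    {V : Type*} [AddCommGroup V] [Module ℂ V]
    (del delJ : Module.End ℂ V)
    (hd2 : del * del = 0) (hdJ2 : delJ * delJ = 0)
    (hanti : del * delJ + delJ * del = 0)
    (hlemma : ∀ α : V, del α = 0 → delJ α = 0 → (∃ β γ : V, α = del β + delJ γ) →
      ∃ η : V, α = del (delJ η)) :
    -- injectivity of H(i)
    (∀ α : V, delJ α = 0 → del α = 0 → (∃ β : V, α = del β) →
      ∃ γ : V, delJ γ = 0 ∧ α = del γ) ∧
    -- surjectivity of H(i)
    (∀ α : V, del α = 0 → ∃ γ β : V, delJ γ = 0 ∧ α = γ + del β) :=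
  inclusion_ker_delJ_quasi_iso_general del delJ hdJ2 hanti hlemma
end

section
/- Let (A•, ∂) be a differential graded algebra and suppose there is a second degree-1 differential ∂_J anticommuting with ∂ such that ker ∂_J is a subalgebra and the ∂∂_J-lemma holds. Then the DGA (A•, ∂) is formal: it is connected to a DGA with zero differential by a zigzag of quasi-isomorphisms, namely (A•, ∂) ← (A• ∩ ker ∂_J, ∂) → (H•_{∂_J}, 0). -/
/-!
Everything follows from the `∂∂_J`-lemma applied to suitable elements that are both `∂`- and
`∂_J`-closed. A `∂`-exact or `∂_J`-exact such element is `∂∂_J η`, hence `∂` of the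
`∂_J`-closed element `∂_J η`. If `∂_J α = 0`, then `∂α` is such an element, and writing
`∂α = ∂∂_J η` shows both that `∂α = ∂_J(-∂η)` and that `α - ∂_J η` is `∂`-closed. The
statement for `∂`-closed elements is the same argument with the roles of `∂` and `∂_J` exchanged,
which is legitimate because the `∂∂_J`-lemma is symmetric: `∂∂_J η = ∂_J∂(-η)`.
-/

section Bicomplex

variable {M : Type*} [AddCommGroup M]

structure AnticommutingDifferentials (d dJ : M →+ M) : Prop where
  d_sq : ∀ x, d (d x) = 0
  dJ_sq : ∀ x, dJ (dJ x) = 0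
  anticomm : ∀ x, d (dJ x) + dJ (d x) = 0

def DDJLemma (d dJ : M →+ M) : Prop :=
  ∀ α, d α = 0 → dJ α = 0 → (∃ β γ, α = d β + dJ γ) → ∃ η, α = d (dJ η)

variable {d dJ : M →+ M}

namespace AnticommutingDifferentials

theorem symm (hD : AnticommutingDifferentials d dJ) : AnticommutingDifferentials dJ d :=
  ⟨hD.dJ_sq, hD.d_sq, fun x => by rw [add_comm, hD.anticomm]⟩

theorem d_dJ_eq (hD : AnticommutingDifferentials d dJ) (x : M) : d (dJ x) = dJ (d (-x)) := by
  rw [map_neg, map_neg, eq_neg_iff_add_eq_zero, hD.anticomm]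

theorem dJ_d_eq_zero_of_dJ_eq_zero (hD : AnticommutingDifferentials d dJ) {x : M}
    (hx : dJ x = 0) : dJ (d x) = 0 := by
  simpa [hx] using hD.anticomm x

end AnticommutingDifferentials

namespace DDJLemma

theorem symm (hD : AnticommutingDifferentials d dJ) (h : DDJLemma d dJ) : DDJLemma dJ d := by
  rintro α hdJα hdα ⟨β, γ, rfl⟩
  obtain ⟨η, hη⟩ := h _ hdα hdJα ⟨γ, β, add_comm _ _⟩
  exact ⟨-η, hη.trans (hD.d_dJ_eq η)⟩

theorem exists_dJ_closed_d_primitive (hD : AnticommutingDifferentials d dJ) (h : DDJLemma d dJ)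
    {α : M} (hdα : d α = 0) (hdJα : dJ α = 0) (hex : ∃ β γ, α = d β + dJ γ) :
    ∃ γ, dJ γ = 0 ∧ α = d γ := by
  obtain ⟨η, hη⟩ := h α hdα hdJα hex
  exact ⟨dJ η, hD.dJ_sq η, hη⟩

theorem exists_d_eq_d_dJ (hD : AnticommutingDifferentials d dJ) (h : DDJLemma d dJ)
    {α : M} (hdJα : dJ α = 0) : ∃ η, d α = d (dJ η) :=
  h (d α) (hD.d_sq α) (hD.dJ_d_eq_zero_of_dJ_eq_zero hdJα) ⟨α, 0, by rw [map_zero, add_zero]⟩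

theorem exists_d_eq_dJ (hD : AnticommutingDifferentials d dJ) (h : DDJLemma d dJ)
    {α : M} (hdJα : dJ α = 0) : ∃ β, d α = dJ β := by
  obtain ⟨η, hη⟩ := h.exists_d_eq_d_dJ hD hdJα
  exact ⟨d (-η), hη.trans (hD.d_dJ_eq η)⟩

theorem exists_closed_add_dJ (hD : AnticommutingDifferentials d dJ) (h : DDJLemma d dJ)
    {α : M} (hdJα : dJ α = 0) : ∃ β ν, dJ β = 0 ∧ d β = 0 ∧ α = β + dJ ν := by
  obtain ⟨η, hη⟩ := h.exists_d_eq_d_dJ hD hdJα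
  refine ⟨α - dJ η, η, ?_, ?_, (sub_add_cancel α _).symm⟩
  · rw [map_sub, hdJα, hD.dJ_sq, sub_zero]
  · rw [map_sub, hη, sub_self]

end DDJLemma

end Bicomplex

theorem ddJ_lemma_implies_formal_general
    {V : Type*} [Ring V] [Algebra ℂ V]
    (del delJ : Module.End ℂ V)
    (hd2 : del * del = 0) (hdJ2 : delJ * delJ = 0)
    (hanti : del * delJ + delJ * del = 0)
    -- the ∂∂_J-lemma
    (hlemma : ∀ α : V, del α = 0 → delJ α = 0 → (∃ β γ : V, α = del β + delJ γ) →
      ∃ η : V, α = del (delJ η)) :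
    -- (1) the inclusion (A ∩ ker ∂_J, ∂) → (A, ∂) is a quasi-isomorphism
    ((∀ α : V, delJ α = 0 → del α = 0 → (∃ β : V, α = del β) →
        ∃ γ : V, delJ γ = 0 ∧ α = del γ) ∧
      (∀ α : V, del α = 0 → ∃ γ β : V, delJ γ = 0 ∧ α = γ + del β)) ∧
    -- (2) the induced differential on H_{∂_J} is zero
    (∀ α : V, delJ α = 0 → ∃ β : V, del α = delJ β) ∧
    -- (3) the projection (A ∩ ker ∂_J, ∂) → (H_{∂_J}, 0) is a quasi-isomorphism
    ((∀ α : V, delJ α = 0 → del α = 0 → (∃ ν : V, α = delJ ν) →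
        ∃ γ : V, delJ γ = 0 ∧ α = del γ) ∧
      (∀ α : V, delJ α = 0 →
        ∃ β ν : V, delJ β = 0 ∧ del β = 0 ∧ α = β + delJ ν)) := by
  have hD : AnticommutingDifferentials (del : V →+ V) delJ :=
    ⟨fun x => LinearMap.congr_fun hd2 x, fun x => LinearMap.congr_fun hdJ2 x,
      fun x => LinearMap.congr_fun hanti x⟩
  have h : DDJLemma (del : V →+ V) delJ := hlemma
  refine ⟨⟨?_, fun α hdα => ?_⟩, fun α => h.exists_d_eq_dJ hD, ?_,
    fun α => h.exists_closed_add_dJ hD⟩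
  · rintro α hdJα hdα ⟨β, rfl⟩
    exact h.exists_dJ_closed_d_primitive hD hdα hdJα ⟨β, 0, by simp⟩
  · obtain ⟨γ, β, -, hdJγ, hγ⟩ := (h.symm hD).exists_closed_add_dJ hD.symm hdα
    exact ⟨γ, β, hdJγ, hγ⟩
  · rintro α hdJα hdα ⟨ν, rfl⟩
    exact h.exists_dJ_closed_d_primitive hD hdα hdJα ⟨0, ν, by simp⟩

/-- **Theorem 4.1 (formality).** Let `(A•, ∂)` be a differential graded algebra with a
second degree-1 differential `∂_J` anticommuting with `∂`, such that `ker ∂_J` is a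
subalgebra and the `∂∂_J`-lemma holds. Then `(A•, ∂)` is formal: it is connected to a
DGA with zero differential by the zigzag of quasi-isomorphisms
`(A•, ∂) ← (A• ∩ ker ∂_J, ∂) → (H•_{∂_J}, 0)`. The conclusion states: (1) the
inclusion is a quasi-isomorphism, (2) the differential induced by `∂` on `H•_{∂_J}`
is zero, and (3) the projection onto `(H•_{∂_J}, 0)` is a quasi-isomorphism. -/
theorem ddJ_lemma_implies_formal
    {V : Type*} [Ring V] [Algebra ℂ V]
    (A : ℕ → Submodule ℂ V)
    (del delJ : Module.End ℂ V)
    -- degree-1 operators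
    (hdeldeg : ∀ p, ∀ x ∈ A p, del x ∈ A (p + 1))
    (hdelJdeg : ∀ p, ∀ x ∈ A p, delJ x ∈ A (p + 1))
    -- differentials of a DGA: Leibniz rules with graded sign
    (hLeib : ∀ (p : ℕ) (x y : V), x ∈ A p →
      del (x * y) = del x * y + ((-1 : ℂ) ^ p) • (x * del y))
    (hLeibJ : ∀ (p : ℕ) (x y : V), x ∈ A p →
      delJ (x * y) = delJ x * y + ((-1 : ℂ) ^ p) • (x * delJ y))
    (hd2 : del * del = 0) (hdJ2 : delJ * delJ = 0)
    (hanti : del * delJ + delJ * del = 0)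
    -- ker ∂_J is a subalgebra
    (hker : ∀ x y : V, delJ x = 0 → delJ y = 0 → delJ (x * y) = 0)
    -- the ∂∂_J-lemma
    (hlemma : ∀ α : V, del α = 0 → delJ α = 0 → (∃ β γ : V, α = del β + delJ γ) →
      ∃ η : V, α = del (delJ η)) :
    -- (1) the inclusion (A ∩ ker ∂_J, ∂) → (A, ∂) is a quasi-isomorphism
    ((∀ α : V, delJ α = 0 → del α = 0 → (∃ β : V, α = del β) →
        ∃ γ : V, delJ γ = 0 ∧ α = del γ) ∧
      (∀ α : V, del α = 0 → ∃ γ β : V, delJ γ = 0 ∧ α = γ + del β)) ∧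
    -- (2) the induced differential on H_{∂_J} is zero
    (∀ α : V, delJ α = 0 → ∃ β : V, del α = delJ β) ∧
    -- (3) the projection (A ∩ ker ∂_J, ∂) → (H_{∂_J}, 0) is a quasi-isomorphism
    ((∀ α : V, delJ α = 0 → del α = 0 → (∃ ν : V, α = delJ ν) →
        ∃ γ : V, delJ γ = 0 ∧ α = del γ) ∧
      (∀ α : V, delJ α = 0 →
        ∃ β ν : V, delJ β = 0 ∧ del β = 0 ∧ α = β + delJ ν)) :=
  ddJ_lemma_implies_formal_general del delJ hd2 hdJ2 hanti hlemma
end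

section
/- On the 8-dimensional solvable Lie algebra 𝔤 with basis e_1,...,e_8 and nonzero brackets [e_8, e_2] = e_4, [e_8, e_3] = e_5, equipped with the complex structure given by (1,0)-coframe φ¹ = e¹ + ie⁸, φ² = e² + ie³, φ³ = e⁴ + ie⁵, φ⁴ = e⁶ + ie⁷ (so dφ¹ = dφ² = dφ⁴ = 0 and dφ³ = (i/2)φ¹∧φ² + (i/2)φ²∧φ̄¹), the triple ∂-Massey product ⟨[φ¹], [φ²], [φ²]⟩ is nontrivial: the class [-2i φ³∧φ²] is nonzero in H^{2,0}_∂ / ([φ¹]∪H^{1,0}_∂ + H^{1,0}_∂∪[φ²]). -/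
/-!
The coefficient of `φ³∧φ²` is a linear functional on the exterior algebra that vanishes on
everything one is allowed to subtract. Since `∂` raises degree and is zero on `φ¹, φ², φ⁴`,
the image of `∂` in degree two is spanned by `φ¹∧φ²`, which has no `φ³∧φ²` component.
Products `φ¹∧w` never contain `φ³∧φ²`, and a closed `w` has no `φ³` component (its
`∂` would be a nonzero multiple of `φ¹∧φ²`), so `w∧φ²` has none either.
-/

open ExteriorAlgebra

namespace ExteriorAlgebra

variable {R M : Type*} [CommRing R] [AddCommGroup M] [Module R M]

def wedgeCoeff (f g : Module.Dual R M) : ExteriorAlgebra R M →ₗ[R] R :=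
  liftAlternating <| Function.update 0 2 <|
    Matrix.detRowAlternating.compLinearMap (LinearMap.pi ![f, g])

theorem wedgeCoeff_ι_mul_ι (f g : Module.Dual R M) (m n : M) :
    wedgeCoeff f g (ι R m * ι R n) = f m * g n - g m * f n := by
  rw [wedgeCoeff, liftAlternating_ι_mul, liftAlternating_ι, Function.update_self]
  change Matrix.det (Matrix.of ![![f m, g m], ![f n, g n]]) = _
  rw [Matrix.det_fin_two_of]

theorem wedgeCoeff_eq_zero_of_mem_pow (f g : Module.Dual R M) {q : ℕ} (hq : q ≠ 2)
    {x : ExteriorAlgebra R M} (hx : x ∈ LinearMap.range (ι R (M := M)) ^ q) :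
    wedgeCoeff f g x = 0 := by
  replace hx : x ∈ Submodule.span R (Set.range (ιMulti R q)) := by
    rwa [ιMulti_span_fixedDegree]
  induction hx using Submodule.span_induction with
  | mem z hz =>
    obtain ⟨v, rfl⟩ := hz
    rw [wedgeCoeff, liftAlternating_apply_ιMulti, Function.update_of_ne hq]
    rfl
  | zero => simp
  | add _ _ _ _ hx hy => simp [hx, hy]
  | smul c _ _ hx => simp [hx]

theorem map_comp_eq_zero_of_raises_degree {N : Type*} [AddCommGroup N] [Module R N]
    (L : ExteriorAlgebra R M →ₗ[R] N) (del : Module.End R (ExteriorAlgebra R M)) (n : ℕ)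
    (hdeg : ∀ p : ℕ, ∀ x ∈ LinearMap.range (ι R (M := M)) ^ p,
      del x ∈ LinearMap.range (ι R (M := M)) ^ (p + 1))
    (hL : ∀ q ≠ n + 1, ∀ x ∈ LinearMap.range (ι R (M := M)) ^ q, L x = 0)
    (hn : ∀ x ∈ LinearMap.range (ι R (M := M)) ^ n, L (del x) = 0)
    (x : ExteriorAlgebra R M) : L (del x) = 0 := by
  induction x using DirectSum.Decomposition.inductionOn (fun i : ℕ => ⋀[R]^i M) with
  | zero => simp
  | add a b ha hb => rw [map_add, map_add, ha, hb, add_zero]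
  | @homogeneous i x =>
    by_cases hi : i = n
    · subst hi
      exact hn x x.2
    · exact hL (i + 1) (by omega) _ (hdeg i x x.2)

end ExteriorAlgebra

section Solvmanifold

open Complex

variable (del : Module.End ℂ (ExteriorAlgebra ℂ (Fin 4 → ℂ)))

theorem del_ι_eq (h1 : del (ι ℂ (Pi.single 0 1)) = 0) (h2 : del (ι ℂ (Pi.single 1 1)) = 0)
    (h4 : del (ι ℂ (Pi.single 3 1)) = 0)
    (h3 : del (ι ℂ (Pi.single 2 1)) = (I / 2) • (ι ℂ (Pi.single 0 1) * ι ℂ (Pi.single 1 1)))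
    (m : Fin 4 → ℂ) :
    del (ι ℂ m) = (m 2 * (I / 2)) • (ι ℂ (Pi.single 0 1) * ι ℂ (Pi.single 1 1)) := by
  conv_lhs => rw [pi_eq_sum_univ' m]
  simp [Fin.sum_univ_four, h1, h2, h3, h4, smul_smul]

theorem coord_two_eq_zero_of_del_ι_eq_zero
    (hdel : ∀ m, del (ι ℂ m) = (m 2 * (I / 2)) • (ι ℂ (Pi.single 0 1) * ι ℂ (Pi.single 1 1)))
    {v : Fin 4 → ℂ} (hv : del (ι ℂ v) = 0) : v 2 = 0 := by
  have := congrArg (wedgeCoeff (LinearMap.proj 0) (LinearMap.proj 1)) hv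
  simpa [hdel, wedgeCoeff_ι_mul_ι, I_ne_zero] using this

end Solvmanifold

theorem solvmanifold_nontrivial_massey_product_general
    (del : Module.End ℂ (ExteriorAlgebra ℂ (Fin 4 → ℂ)))
    (φ : Fin 4 → ExteriorAlgebra ℂ (Fin 4 → ℂ))
    (hφ : φ = fun i => ExteriorAlgebra.ι ℂ (Pi.single i (1 : ℂ)))
    -- ∂ is a degree-1 graded derivation
    (hdeg : ∀ p : ℕ, ∀ x ∈ (LinearMap.range (ExteriorAlgebra.ι ℂ (M := Fin 4 → ℂ))) ^ p,
      del x ∈ (LinearMap.range (ExteriorAlgebra.ι ℂ (M := Fin 4 → ℂ))) ^ (p + 1))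
    -- structure equations: ∂φ¹ = ∂φ² = ∂φ⁴ = 0, ∂φ³ = (i/2) φ¹∧φ²
    (h1 : del (φ 0) = 0) (h2 : del (φ 1) = 0) (h4 : del (φ 3) = 0)
    (h3 : del (φ 2) = (Complex.I / 2) • (φ 0 * φ 1)) :
    ¬ ((-2 * Complex.I) • (φ 2 * φ 1) ∈
        LinearMap.range del ⊔
        Submodule.span ℂ {z : ExteriorAlgebra ℂ (Fin 4 → ℂ) | ∃ w,
          w ∈ (LinearMap.range (ExteriorAlgebra.ι ℂ (M := Fin 4 → ℂ))) ^ (1 : ℕ) ∧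
          del w = 0 ∧ z = φ 0 * w} ⊔
        Submodule.span ℂ {z : ExteriorAlgebra ℂ (Fin 4 → ℂ) | ∃ w,
          w ∈ (LinearMap.range (ExteriorAlgebra.ι ℂ (M := Fin 4 → ℂ))) ^ (1 : ℕ) ∧
          del w = 0 ∧ z = w * φ 1}) := by
  subst hφ
  have hdel := del_ι_eq del h1 h2 h4 h3
  -- the coefficient of `φ³∧φ²`
  set L : ExteriorAlgebra ℂ (Fin 4 → ℂ) →ₗ[ℂ] ℂ := wedgeCoeff (LinearMap.proj 2) (LinearMap.proj 1)
  have hL_del : ∀ x, L (del x) = 0 := by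
    refine map_comp_eq_zero_of_raises_degree L del 1 hdeg
      (fun q hq _ hx => wedgeCoeff_eq_zero_of_mem_pow _ _ hq hx) fun x hx => ?_
    rw [pow_one] at hx
    obtain ⟨m, rfl⟩ := hx
    simp [L, hdel, wedgeCoeff_ι_mul_ι]
  intro hmem
  rw [pow_one] at hmem
  suffices L ((-2 * Complex.I) • (ι ℂ (Pi.single 2 1) * ι ℂ (Pi.single 1 1))) = 0 by
    simp [L, wedgeCoeff_ι_mul_ι, Complex.I_ne_zero] at this
  refine (sup_le (sup_le ?_ ?_) ?_ : _ ≤ LinearMap.ker L) hmem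
  · rintro _ ⟨x, rfl⟩
    exact hL_del x
  · rw [Submodule.span_le]
    rintro _ ⟨_, ⟨v, rfl⟩, -, rfl⟩
    simp [L, wedgeCoeff_ι_mul_ι]
  · rw [Submodule.span_le]
    rintro _ ⟨_, ⟨v, rfl⟩, hclosed, rfl⟩
    simp [L, wedgeCoeff_ι_mul_ι, coord_two_eq_zero_of_del_ι_eq_zero del hdel hclosed]

/-- **Example (8-dimensional solvmanifold with nontrivial Massey product).** Consider
the complex of `(•,0)`-forms on the 8-dimensional solvable Lie algebra `𝔤` with
brackets `[e₈,e₂] = e₄`, `[e₈,e₃] = e₅` and the complex structure with `(1,0)`-coframe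
`φ¹ = e¹+ie⁸, φ² = e²+ie³, φ³ = e⁴+ie⁵, φ⁴ = e⁶+ie⁷`, so that
`∂φ¹ = ∂φ² = ∂φ⁴ = 0` and `∂φ³ = (i/2) φ¹∧φ²`. We model the invariant `(•,0)`-forms
as the exterior algebra on `ℂ⁴ = span(φ¹,...,φ⁴)` (here `φ i := ι (Pi.single i 1)`,
with `φ 0, φ 1, φ 2, φ 3` standing for `φ¹, φ², φ³, φ⁴`), with `∂` the graded
derivation determined by its values on the generators. Then the triple `∂`-Massey
product `⟨[φ¹],[φ²],[φ²]⟩ = [-2i φ³∧φ²]` is nontrivial: `-2i φ³∧φ²` does not lie in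
`im ∂ + [φ¹]∪H^{1,0}_∂ + H^{1,0}_∂∪[φ²]`. -/
theorem solvmanifold_nontrivial_massey_product
    (del : Module.End ℂ (ExteriorAlgebra ℂ (Fin 4 → ℂ)))
    (φ : Fin 4 → ExteriorAlgebra ℂ (Fin 4 → ℂ))
    (hφ : φ = fun i => ExteriorAlgebra.ι ℂ (Pi.single i (1 : ℂ)))
    -- ∂ is a degree-1 graded derivation
    (hdeg : ∀ p : ℕ, ∀ x ∈ (LinearMap.range (ExteriorAlgebra.ι ℂ (M := Fin 4 → ℂ))) ^ p,
      del x ∈ (LinearMap.range (ExteriorAlgebra.ι ℂ (M := Fin 4 → ℂ))) ^ (p + 1))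
    (hLeib : ∀ (p : ℕ) (x y : ExteriorAlgebra ℂ (Fin 4 → ℂ)),
      x ∈ (LinearMap.range (ExteriorAlgebra.ι ℂ (M := Fin 4 → ℂ))) ^ p →
      del (x * y) = del x * y + ((-1 : ℂ) ^ p) • (x * del y))
    (hd2 : del * del = 0)
    -- structure equations: ∂φ¹ = ∂φ² = ∂φ⁴ = 0, ∂φ³ = (i/2) φ¹∧φ²
    (h1 : del (φ 0) = 0) (h2 : del (φ 1) = 0) (h4 : del (φ 3) = 0)
    (h3 : del (φ 2) = (Complex.I / 2) • (φ 0 * φ 1)) :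
    ¬ ((-2 * Complex.I) • (φ 2 * φ 1) ∈
        LinearMap.range del ⊔
        Submodule.span ℂ {z : ExteriorAlgebra ℂ (Fin 4 → ℂ) | ∃ w,
          w ∈ (LinearMap.range (ExteriorAlgebra.ι ℂ (M := Fin 4 → ℂ))) ^ (1 : ℕ) ∧
          del w = 0 ∧ z = φ 0 * w} ⊔
        Submodule.span ℂ {z : ExteriorAlgebra ℂ (Fin 4 → ℂ) | ∃ w,
          w ∈ (LinearMap.range (ExteriorAlgebra.ι ℂ (M := Fin 4 → ℂ))) ^ (1 : ℕ) ∧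
          del w = 0 ∧ z = w * φ 1}) :=
  solvmanifold_nontrivial_massey_product_general del φ hφ hdeg h1 h2 h4 h3
end
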